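/- arXiv:1501.07414 — 7 statements merged into one kernel-verified Lean document; each statement's English description precedes it below -/
import Mathlib

section
/- The coefficients (β̃^Λ)_{Λ ∈ S̃} of the least-squares approximation f̃ of f on S̃ are characterized by the normal equations: Σ_{x ∈ Ω_λ} f̃(x) = Σ_{x ∈ Ω_λ} f(x) for all λ ∈ S̃, where Ω_λ = {x ∈ {0,1}^n : x_k = 1 for all k ∈ λ}. -/
open Finset

/-- The monomial `∏_{k ∈ Λ} x_k` for binary `x`. -/
noncomputable def mono {n : ℕ} (Λ : Finset (Fin n)) (x : Fin n → Bool) : ℝ :=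
  ∏ k ∈ Λ, (if x k then (1 : ℝ) else 0)

/-- Binary polynomial represented on the family `S` with coefficients `β`. -/
noncomputable def poly {n : ℕ} (S : Finset (Finset (Fin n))) (β : Finset (Fin n) → ℝ)
    (x : Fin n → Bool) : ℝ :=
  ∑ Λ ∈ S, β Λ * mono Λ x

/-- Error sum of squares between two pseudo-Boolean functions. -/
noncomputable def SSE {n : ℕ} (f g : (Fin n → Bool) → ℝ) : ℝ :=
  ∑ x : Fin n → Bool, (f x - g x) ^ 2

/-- `g` is the least-squares approximation of `f` represented on `S`. -/
def isLSA {n : ℕ} (S : Finset (Finset (Fin n))) (f g : (Fin n → Bool) → ℝ) : Prop :=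
  (∃ β : Finset (Fin n) → ℝ, g = poly S β) ∧
    ∀ γ : Finset (Fin n) → ℝ, SSE f g ≤ SSE f (poly S γ)

/-- `Ω_λ`: the binary vectors with `x_k = 1` for all `k ∈ λ`. -/
def Omega {n : ℕ} (lam : Finset (Fin n)) : Finset (Fin n → Bool) :=
  Finset.univ.filter (fun x => ∀ k ∈ lam, x k = true)

/-!
`SSE` is the squared distance in the Euclidean space `ℝ^Ω`, and the polynomials represented on
`S̃` form the range of a linear map into it. A point of that range is a best approximation of `f`
exactly when the residual `f - f̃` is orthogonal to the whole range, i.e. to every monomial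
`∏_{k ∈ λ} x_k` with `λ ∈ S̃`. That monomial is the indicator of `Ω_λ`, so orthogonality to it is
the normal equation for `λ`.
-/

open scoped RealInnerProductSpace

section InnerProductSpace

variable {V E : Type*} [AddCommGroup V] [Module ℝ V]
variable [NormedAddCommGroup E] [InnerProductSpace ℝ E]

theorem Submodule.forall_norm_sub_le_iff_forall_inner_eq_zero (K : Submodule ℝ E) {u v : E}
    (hv : v ∈ K) : (∀ w ∈ K, ‖u - v‖ ≤ ‖u - w‖) ↔ ∀ w ∈ K, ⟪u - v, w⟫ = 0 := by
  have hbdd : BddBelow (Set.range fun w : (K : Set E) => ‖u - w‖) :=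
    ⟨0, Set.forall_mem_range.2 fun _ => norm_nonneg _⟩
  rw [← norm_eq_iInf_iff_real_inner_eq_zero K hv]
  refine ⟨fun h => le_antisymm (le_ciInf fun w => h w w.2) (ciInf_le hbdd ⟨v, hv⟩), ?_⟩
  intro h w hw
  rw [h]
  exact ciInf_le hbdd ⟨w, hw⟩

theorem LinearMap.forall_norm_sub_le_iff_forall_inner_eq_zero (L : V →ₗ[ℝ] E) (u : E) (c : V) :
    (∀ c', ‖u - L c‖ ≤ ‖u - L c'‖) ↔ ∀ c', ⟪u - L c, L c'⟫ = 0 := by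
  simpa only [LinearMap.mem_range, forall_exists_index, forall_apply_eq_imp_iff] using
    (LinearMap.range L).forall_norm_sub_le_iff_forall_inner_eq_zero (u := u) (L.mem_range_self c)

end InnerProductSpace

theorem Finset.forall_sum_mul_eq_zero_iff {ι R : Type*} [DecidableEq ι] [NonAssocSemiring R]
    (s : Finset ι) (a : ι → R) :
    (∀ c : ι → R, ∑ i ∈ s, c i * a i = 0) ↔ ∀ i ∈ s, a i = 0 := by
  refine ⟨fun h i hi => ?_, fun h c => sum_eq_zero fun i hi => by rw [h i hi, mul_zero]⟩
  simpa [ite_mul, hi] using h fun j => if j = i then 1 else 0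

lemma mono_eq_ite_mem_Omega {n : ℕ} (Λ : Finset (Fin n)) (x : Fin n → Bool) :
    mono Λ x = if x ∈ Omega Λ then 1 else 0 := by
  simp only [Omega, mem_filter, mem_univ, true_and]
  split_ifs with h
  · exact prod_eq_one fun k hk => by simp [h k hk]
  · push Not at h
    obtain ⟨k, hk, hxk⟩ := h
    exact prod_eq_zero hk (by simp [hxk])

lemma sum_mul_mono {n : ℕ} (Λ : Finset (Fin n)) (h : (Fin n → Bool) → ℝ) :
    ∑ x, h x * mono Λ x = ∑ x ∈ Omega Λ, h x := by
  simp only [mono_eq_ite_mem_Omega, mul_ite, mul_one, mul_zero, sum_ite_mem, univ_inter]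

lemma SSE_eq_norm_sq {n : ℕ} (f g : (Fin n → Bool) → ℝ) :
    SSE f g = ‖WithLp.toLp 2 f - WithLp.toLp 2 g‖ ^ 2 := by
  simp [SSE, EuclideanSpace.real_norm_sq_eq]

noncomputable def polyLinearMap {n : ℕ} (S : Finset (Finset (Fin n))) :
    (Finset (Fin n) → ℝ) →ₗ[ℝ] EuclideanSpace ℝ (Fin n → Bool) where
  toFun β := WithLp.toLp 2 (poly S β)
  map_add' β γ := by ext x; simp [poly, add_mul, sum_add_distrib]
  map_smul' c β := by ext x; simp [poly, mul_sum, mul_assoc]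

@[simp]
lemma polyLinearMap_apply {n : ℕ} (S : Finset (Finset (Fin n))) (β : Finset (Fin n) → ℝ) :
    polyLinearMap S β = WithLp.toLp 2 (poly S β) := rfl

lemma inner_toLp_poly {n : ℕ} (S : Finset (Finset (Fin n))) (r : (Fin n → Bool) → ℝ)
    (γ : Finset (Fin n) → ℝ) :
    ⟪WithLp.toLp 2 r, WithLp.toLp 2 (poly S γ)⟫ = ∑ Λ ∈ S, γ Λ * ∑ x ∈ Omega Λ, r x := by
  simp only [PiLp.inner_apply, RCLike.inner_apply', conj_trivial, poly, mul_sum, ← sum_mul_mono]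
  rw [sum_comm]
  exact sum_congr rfl fun Λ _ => sum_congr rfl fun x _ => by ring

/-- The least-squares coefficients are characterized by the normal equations. -/
theorem lsa_iff_normal_equations {n : ℕ} (f : (Fin n → Bool) → ℝ)
    (S : Finset (Finset (Fin n))) (β : Finset (Fin n) → ℝ) :
    (∀ γ : Finset (Fin n) → ℝ, SSE f (poly S β) ≤ SSE f (poly S γ)) ↔
      ∀ lam ∈ S, ∑ x ∈ Omega lam, poly S β x = ∑ x ∈ Omega lam, f x := by
  set u := WithLp.toLp 2 f
  calc (∀ γ, SSE f (poly S β) ≤ SSE f (poly S γ))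
      ↔ ∀ γ, ‖u - polyLinearMap S β‖ ≤ ‖u - polyLinearMap S γ‖ := by
        simp only [SSE_eq_norm_sq, polyLinearMap_apply, u,
          sq_le_sq₀ (norm_nonneg _) (norm_nonneg _)]
    _ ↔ ∀ γ, ⟪u - polyLinearMap S β, polyLinearMap S γ⟫ = 0 :=
        (polyLinearMap S).forall_norm_sub_le_iff_forall_inner_eq_zero u β
    _ ↔ ∀ γ : Finset (Fin n) → ℝ, ∑ Λ ∈ S, γ Λ * ∑ x ∈ Omega Λ, (f x - poly S β x) = 0 := by
        simp only [polyLinearMap_apply, u, ← WithLp.toLp_sub, inner_toLp_poly, Pi.sub_apply]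
    _ ↔ ∀ lam ∈ S, ∑ x ∈ Omega lam, (f x - poly S β x) = 0 := forall_sum_mul_eq_zero_iff S _
    _ ↔ ∀ lam ∈ S, ∑ x ∈ Omega lam, poly S β x = ∑ x ∈ Omega lam, f x :=
        forall₂_congr fun lam _ => by rw [sum_sub_distrib, sub_eq_zero, eq_comm]
end

section
/- The least-squares approximation operators satisfy the projection tower property: if S̃̃ ⊆ S̃ are families of subsets of N, then A_{S̃̃}[A_{S̃}{f}] = A_{S̃̃}{f} for any pseudo-Boolean function f. -/
open Finset

/-! The least-squares approximation on `S` is characterized by the normal equations: it is a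
polynomial on `S` whose residual `f - g` is orthogonal to every monomial `Λ ∈ S`. If `f - F` is
orthogonal to the monomials of `S1 ⊇ S2` and `F - G` to those of `S2`, then so is their sum
`f - G`, and `G` is a polynomial on `S2`. -/

section LeastSquares

variable {n : ℕ}

lemma poly_add (S : Finset (Finset (Fin n))) (β γ : Finset (Fin n) → ℝ) :
    poly S (β + γ) = poly S β + poly S γ := by
  funext x
  simp only [poly, Pi.add_apply, add_mul, sum_add_distrib]

lemma poly_sub (S : Finset (Finset (Fin n))) (β γ : Finset (Fin n) → ℝ) :
    poly S (β - γ) = poly S β - poly S γ := by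
  funext x
  simp only [poly, Pi.sub_apply, sub_mul, sum_sub_distrib]

lemma poly_single {S : Finset (Finset (Fin n))} {Λ : Finset (Fin n)} (hΛ : Λ ∈ S) (t : ℝ) :
    poly S (Pi.single Λ t) = fun x => t * mono Λ x := by
  funext x
  rw [poly, sum_eq_single_of_mem Λ hΛ fun Λ' _ hne => by simp [hne]]
  simp

lemma sum_mul_poly (S : Finset (Finset (Fin n))) (u : (Fin n → Bool) → ℝ)
    (δ : Finset (Fin n) → ℝ) :
    ∑ x, u x * poly S δ x = ∑ Λ ∈ S, δ Λ * ∑ x, u x * mono Λ x := by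
  simp only [poly, mul_sum]
  rw [sum_comm]
  exact sum_congr rfl fun Λ _ => sum_congr rfl fun x _ => by ring

lemma SSE_add (f g h : (Fin n → Bool) → ℝ) :
    SSE f (g + h) = SSE f g - 2 * ∑ x, (f x - g x) * h x + ∑ x, h x ^ 2 := by
  simp only [SSE, Pi.add_apply, mul_sum, ← sum_sub_distrib, ← sum_add_distrib]
  exact sum_congr rfl fun x _ => by ring

lemma sum_residual_mul_mono_eq_zero {S : Finset (Finset (Fin n))} {f g : (Fin n → Bool) → ℝ}
    (h : isLSA S f g) {Λ : Finset (Fin n)} (hΛ : Λ ∈ S) :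
    ∑ x, (f x - g x) * mono Λ x = 0 := by
  obtain ⟨⟨β, rfl⟩, hmin⟩ := h
  set c := ∑ x, (f x - poly S β x) * mono Λ x
  -- Shifting the coefficient of `Λ` by `t` adds `t² ∑ x, mono Λ x ^ 2 - 2 t c` to the error.
  have hquad : ∀ t : ℝ, 0 ≤ (∑ x, mono Λ x ^ 2) * (t * t) + (-2 * c) * t + 0 := by
    intro t
    have hle := hmin (β + Pi.single Λ t)
    rw [poly_add, poly_single hΛ, SSE_add] at hle
    have hcross : ∑ x, (f x - poly S β x) * (t * mono Λ x) = t * c := by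
      rw [mul_sum]
      exact sum_congr rfl fun x _ => by ring
    have hsq : ∑ x, (t * mono Λ x) ^ 2 = (∑ x, mono Λ x ^ 2) * (t * t) := by
      rw [sum_mul]
      exact sum_congr rfl fun x _ => by ring
    rw [hcross, hsq] at hle
    linarith
  have hdisc := discrim_le_zero hquad
  rw [discrim] at hdisc
  nlinarith [sq_nonneg c]

lemma isLSA_of_sum_residual_mul_mono_eq_zero {S : Finset (Finset (Fin n))}
    {f g : (Fin n → Bool) → ℝ} {β : Finset (Fin n) → ℝ} (hg : g = poly S β)
    (horth : ∀ Λ ∈ S, ∑ x, (f x - g x) * mono Λ x = 0) :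
    isLSA S f g := by
  refine ⟨⟨β, hg⟩, fun γ => ?_⟩
  have hγ : poly S γ = g + poly S (γ - β) := by
    rw [poly_sub, hg, add_sub_cancel]
  have hcross : ∑ x, (f x - g x) * poly S (γ - β) x = 0 := by
    rw [sum_mul_poly]
    exact sum_eq_zero fun Λ hΛ => by rw [horth Λ hΛ, mul_zero]
  have hsq : 0 ≤ ∑ x, poly S (γ - β) x ^ 2 := sum_nonneg fun x _ => sq_nonneg _
  rw [hγ, SSE_add, hcross]
  linarith

theorem isLSA_iff {S : Finset (Finset (Fin n))} {f g : (Fin n → Bool) → ℝ} :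
    isLSA S f g ↔
      (∃ β, g = poly S β) ∧ ∀ Λ ∈ S, ∑ x, (f x - g x) * mono Λ x = 0 := by
  refine ⟨fun h => ⟨h.1, fun Λ hΛ => sum_residual_mul_mono_eq_zero h hΛ⟩, ?_⟩
  rintro ⟨⟨β, hg⟩, horth⟩
  exact isLSA_of_sum_residual_mul_mono_eq_zero hg horth

end LeastSquares

/-- Projection tower property of least-squares approximation. -/
theorem lsa_tower {n : ℕ} (S1 S2 : Finset (Finset (Fin n))) (hsub : S2 ⊆ S1)
    (f F G : (Fin n → Bool) → ℝ)
    (h1 : isLSA S1 f F) (h2 : isLSA S2 F G) :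
    isLSA S2 f G := by
  rw [isLSA_iff] at h1 h2 ⊢
  refine ⟨h2.1, fun Λ hΛ => ?_⟩
  calc ∑ x, (f x - G x) * mono Λ x
      = ∑ x, (f x - F x) * mono Λ x + ∑ x, (F x - G x) * mono Λ x := by
        rw [← sum_add_distrib]
        exact sum_congr rfl fun x _ => by ring
    _ = 0 := by rw [h1.2 Λ (hsub hΛ), h2.2 Λ hΛ, add_zero]
end

section
/- If f̃ is the least-squares approximation of f represented on S̃ ⊆ S, where f(x) = Σ_{Λ∈S} β^Λ Π_{k∈Λ} x_k, then SSE(f, f̃) = Σ_{Λ ∈ S∖S̃} β^Λ · Σ_{x ∈ Ω_Λ} (f(x) − f̃(x)). -/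
/-!
The residual `r = f - f̃` of a least-squares approximation on `S̃` is orthogonal to every
monomial `mono Λ` with `Λ ∈ S̃`: otherwise moving the coefficient of `Λ` slightly would lower
the error. Hence `r` is orthogonal to `f̃` and to the part of `f` carried by `S̃`, so
`SSE(f, f̃) = ⟪f, r⟫ = ∑_{Λ ∈ S ∖ S̃} β^Λ ⟪mono Λ, r⟫`, and `⟪mono Λ, r⟫` is the sum of `r`
over `Ω_Λ`.
-/

open Finset

theorem sum_mul_eq_zero_of_forall_sum_sq_le {α : Type*} [Fintype α] (r φ : α → ℝ)
    (h : ∀ t : ℝ, ∑ x, r x ^ 2 ≤ ∑ x, (r x - t * φ x) ^ 2) :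
    ∑ x, φ x * r x = 0 := by
  have hquad : ∀ t : ℝ, 0 ≤ (∑ x, φ x ^ 2) * (t * t) + (-2 * ∑ x, φ x * r x) * t + 0 := by
    intro t
    have expand : ∑ x, (r x - t * φ x) ^ 2
        = ∑ x, r x ^ 2 + ((∑ x, φ x ^ 2) * (t * t) + (-2 * ∑ x, φ x * r x) * t + 0) := by
      simp only [mul_sum, sum_mul, ← sum_add_distrib, add_zero]
      exact sum_congr rfl fun x _ => by ring
    linarith [h t]
  have hdiscrim := discrim_le_zero hquad
  rw [discrim] at hdiscrim
  nlinarith [sq_nonneg (∑ x, φ x * r x)]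

variable {n : ℕ}

theorem sum_mono_mul (Λ : Finset (Fin n)) (c : (Fin n → Bool) → ℝ) :
    ∑ x, mono Λ x * c x = ∑ x ∈ Omega Λ, c x := by
  simp only [Omega, sum_filter, mono, prod_boole, ite_mul, one_mul, zero_mul]

theorem sum_poly_mul (S : Finset (Finset (Fin n))) (β : Finset (Fin n) → ℝ)
    (c : (Fin n → Bool) → ℝ) :
    ∑ x, poly S β x * c x = ∑ Λ ∈ S, β Λ * ∑ x ∈ Omega Λ, c x := by
  simp only [poly, sum_mul, ← sum_mono_mul, mul_sum]
  rw [sum_comm]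
  exact sum_congr rfl fun Λ _ => sum_congr rfl fun x _ => by ring

theorem poly_eq_poly_sdiff_add {S Stil : Finset (Finset (Fin n))} (hsub : Stil ⊆ S)
    (β : Finset (Fin n) → ℝ) (x : Fin n → Bool) :
    poly S β x = poly (S \ Stil) β x + poly Stil β x :=
  (sum_sdiff hsub).symm

theorem poly_add_single {S : Finset (Finset (Fin n))} {Λ : Finset (Fin n)} (hΛ : Λ ∈ S)
    (γ : Finset (Fin n) → ℝ) (t : ℝ) (x : Fin n → Bool) :
    poly S (γ + Pi.single Λ t) x = poly S γ x + t * mono Λ x := by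
  simp only [poly, Pi.add_apply, add_mul, sum_add_distrib, Pi.single_apply, ite_mul, zero_mul,
    sum_ite_eq', if_pos hΛ]

theorem isLSA.sum_mono_mul_sub_eq_zero {S : Finset (Finset (Fin n))}
    {f g : (Fin n → Bool) → ℝ} (h : isLSA S f g) {Λ : Finset (Fin n)} (hΛ : Λ ∈ S) :
    ∑ x, mono Λ x * (f x - g x) = 0 := by
  obtain ⟨⟨γ, rfl⟩, hmin⟩ := h
  refine sum_mul_eq_zero_of_forall_sum_sq_le _ _ fun t => ?_
  have hperturbed := hmin (γ + Pi.single Λ t)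
  simpa only [SSE, poly_add_single hΛ, sub_add_eq_sub_sub] using hperturbed

theorem isLSA.sum_poly_mul_sub_eq_zero {S : Finset (Finset (Fin n))}
    {f g : (Fin n → Bool) → ℝ} (h : isLSA S f g) (γ : Finset (Fin n) → ℝ) :
    ∑ x, poly S γ x * (f x - g x) = 0 := by
  rw [sum_poly_mul]
  refine sum_eq_zero fun Λ hΛ => ?_
  rw [← sum_mono_mul, h.sum_mono_mul_sub_eq_zero hΛ, mul_zero]

/-- The error sum of squares is a sum over the removed interactions. -/
theorem sse_removed_interactions {n : ℕ} (S Stil : Finset (Finset (Fin n)))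
    (hsub : Stil ⊆ S) (β : Finset (Fin n) → ℝ) (ftil : (Fin n → Bool) → ℝ)
    (h : isLSA Stil (poly S β) ftil) :
    SSE (poly S β) ftil =
      ∑ Λ ∈ S \ Stil, β Λ * ∑ x ∈ Omega Λ, (poly S β x - ftil x) := by
  obtain ⟨γ, rfl⟩ := h.1
  calc SSE (poly S β) (poly Stil γ)
      = ∑ x, poly S β x * (poly S β x - poly Stil γ x)
          - ∑ x, poly Stil γ x * (poly S β x - poly Stil γ x) := by
        simp only [SSE, sq, ← sum_sub_distrib, sub_mul]
    _ = ∑ x, poly (S \ Stil) β x * (poly S β x - poly Stil γ x)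
          + ∑ x, poly Stil β x * (poly S β x - poly Stil γ x) := by
        rw [h.sum_poly_mul_sub_eq_zero γ, sub_zero, ← sum_add_distrib]
        simp only [← add_mul, ← poly_eq_poly_sdiff_add hsub]
    _ = _ := by rw [h.sum_poly_mul_sub_eq_zero β, add_zero, sum_poly_mul]
end

section
/- The best (k−1)-order least-squares approximation of the single monomial β^λ Π_{k∈λ} x_k (with |λ| = k) on the family of all strict subsets of λ has coefficients β̃^Λ = (−1)^{|λ|−1−|Λ|} (1/2)^{|λ|−|Λ|} β^λ for each Λ ⊊ λ. That is, the function Σ_{Λ⊊λ} (−1)^{|λ|−1−|Λ|} (1/2)^{|λ|−|Λ|} β^λ Π_{k∈Λ} x_k minimizes the sum of squared errors over {0,1}^n among all functions represented on {Λ : Λ ⊊ λ}. -/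
open Finset

/-!
The residual `b ∏_{k ∈ λ} x_k - g` of the proposed approximation `g` is `b ∏_{k ∈ λ} (x_k - 1/2)`:
expanding this product over the subsets of `λ` produces exactly the stated coefficients. The
centered monomial is orthogonal in `ℓ²({0,1}ⁿ)` to every `∏_{k ∈ Λ} x_k` with `Λ ⊊ λ`, because
the sum over `x` factors through the coordinates and a coordinate `j ∈ λ \ Λ` contributes
`∑_{x_j} (x_j - 1/2) = 0`. A residual orthogonal to the whole family makes `g` the least-squares
approximation, by Pythagoras.
-/

section LeastSquares

variable {n : ℕ} {S : Finset (Finset (Fin n))}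

lemma poly_sub_poly (β γ : Finset (Fin n) → ℝ) (x : Fin n → Bool) :
    poly S β x - poly S γ x = poly S (β - γ) x := by
  simp only [poly, ← sum_sub_distrib, Pi.sub_apply, sub_mul]

lemma sum_mul_poly_eq_zero {r : (Fin n → Bool) → ℝ}
    (hr : ∀ Λ ∈ S, ∑ x, r x * mono Λ x = 0) (β : Finset (Fin n) → ℝ) :
    ∑ x, r x * poly S β x = 0 := by
  simp only [poly, mul_sum]
  rw [sum_comm]
  refine sum_eq_zero fun Λ hΛ => ?_
  simp only [mul_left_comm (r _), ← mul_sum, hr Λ hΛ, mul_zero]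

lemma SSE_poly_eq_add_of_orthogonal {f : (Fin n → Bool) → ℝ} {β : Finset (Fin n) → ℝ}
    (horth : ∀ Λ ∈ S, ∑ x, (f x - poly S β x) * mono Λ x = 0) (γ : Finset (Fin n) → ℝ) :
    SSE f (poly S γ) = SSE f (poly S β) + SSE (poly S β) (poly S γ) := by
  have hcross := sum_mul_poly_eq_zero horth (β - γ)
  simp only [SSE, ← poly_sub_poly] at hcross ⊢
  calc ∑ x, (f x - poly S γ x) ^ 2
      = ∑ x, ((f x - poly S β x) ^ 2 + (poly S β x - poly S γ x) ^ 2
          + 2 * ((f x - poly S β x) * (poly S β x - poly S γ x))) :=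
        sum_congr rfl fun _ _ => by ring
    _ = _ := by rw [sum_add_distrib, sum_add_distrib, ← mul_sum, hcross,
          mul_zero, add_zero]

lemma isLSA_of_orthogonal {f : (Fin n → Bool) → ℝ} {β : Finset (Fin n) → ℝ}
    (horth : ∀ Λ ∈ S, ∑ x, (f x - poly S β x) * mono Λ x = 0) :
    isLSA S f (poly S β) :=
  ⟨⟨β, rfl⟩, fun γ => by
    rw [SSE_poly_eq_add_of_orthogonal horth γ]
    exact le_add_of_nonneg_right (sum_nonneg fun _ _ => sq_nonneg _)⟩

end LeastSquares

section Centered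

variable {n : ℕ}

noncomputable def centeredMono (lam : Finset (Fin n)) (x : Fin n → Bool) : ℝ :=
  ∏ k ∈ lam, ((if x k then (1 : ℝ) else 0) - 1 / 2)

lemma centeredMono_eq_sum_powerset (lam : Finset (Fin n)) (x : Fin n → Bool) :
    centeredMono lam x = ∑ Λ ∈ lam.powerset, (-(1 / 2) : ℝ) ^ (lam.card - Λ.card) * mono Λ x := by
  classical
  simp only [centeredMono, sub_eq_add_neg, prod_add, prod_const]
  refine sum_congr rfl fun Λ hΛ => ?_
  rw [card_sdiff_of_subset (mem_powerset.mp hΛ), mul_comm, mono]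

lemma sum_centeredMono_mul_mono_eq_zero {lam Λ : Finset (Fin n)} (hΛ : Λ ⊂ lam) :
    ∑ x, centeredMono lam x * mono Λ x = 0 := by
  classical
  obtain ⟨j, hjlam, hjΛ⟩ := exists_of_ssubset hΛ
  let φ : Fin n → Bool → ℝ := fun k t =>
    (if k ∈ lam then (if t then (1 : ℝ) else 0) - 1 / 2 else 1) *
      (if k ∈ Λ then (if t then (1 : ℝ) else 0) else 1)
  calc ∑ x, centeredMono lam x * mono Λ x = ∑ x : Fin n → Bool, ∏ k, φ k (x k) :=
        sum_congr rfl fun x _ => by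
          rw [prod_mul_distrib, prod_ite_mem, prod_ite_mem,
            univ_inter, univ_inter, centeredMono, mono]
    _ = ∏ k, ∑ t, φ k t := (Fintype.prod_sum φ).symm
    _ = 0 := prod_eq_zero (mem_univ j) (by simp [φ, hjlam, hjΛ])

end Centered

lemma monomial_sub_poly_eq_centeredMono {n : ℕ} (lam : Finset (Fin n)) (b : ℝ)
    (x : Fin n → Bool) :
    b * mono lam x - poly (lam.powerset.erase lam)
        (fun Λ => (-1 : ℝ) ^ (lam.card - 1 - Λ.card) *
          (1 / 2 : ℝ) ^ (lam.card - Λ.card) * b) x =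
      b * centeredMono lam x := by
  have hcoeff : ∀ Λ ∈ lam.powerset.erase lam,
      (-1 : ℝ) ^ (lam.card - 1 - Λ.card) * (1 / 2 : ℝ) ^ (lam.card - Λ.card) * b =
        -(b * (-(1 / 2) : ℝ) ^ (lam.card - Λ.card)) := fun Λ hΛ => by
    have hlt := card_lt_card (mem_ssubsets.mp hΛ)
    obtain ⟨d, hd⟩ : ∃ d, lam.card - Λ.card = d + 1 := ⟨lam.card - 1 - Λ.card, by omega⟩
    rw [hd, show lam.card - 1 - Λ.card = d by omega, neg_pow (1 / 2 : ℝ), pow_succ, pow_succ]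
    ring
  rw [centeredMono_eq_sum_powerset, ← add_sum_erase _ _ (mem_powerset_self lam),
    poly, sum_congr rfl fun Λ hΛ => congrArg (· * mono Λ x) (hcoeff Λ hΛ)]
  simp only [Nat.sub_self, pow_zero, one_mul, mul_add, mul_sum, neg_mul,
    sum_neg_distrib, mul_assoc]
  ring

theorem monomial_lower_order_approx_general {n : ℕ} (lam : Finset (Fin n))
    (b : ℝ) :
    isLSA (lam.powerset.erase lam) (fun x => b * mono lam x)
      (poly (lam.powerset.erase lam)
        (fun Λ => (-1 : ℝ) ^ (lam.card - 1 - Λ.card) *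
          (1 / 2 : ℝ) ^ (lam.card - Λ.card) * b)) := by
  refine isLSA_of_orthogonal fun Λ hΛ => ?_
  simp only [monomial_sub_poly_eq_centeredMono]
  simp only [mul_assoc, ← mul_sum]
  rw [sum_centeredMono_mul_mono_eq_zero (mem_ssubsets.mp hΛ), mul_zero]

/-- The best lower-order approximation of a single monomial on all strict subsets
of `lam` has the stated coefficients. -/
theorem monomial_lower_order_approx {n : ℕ} (lam : Finset (Fin n))
    (hcard : 1 ≤ lam.card) (b : ℝ) :
    isLSA (lam.powerset.erase lam) (fun x => b * mono lam x)
      (poly (lam.powerset.erase lam)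
        (fun Λ => (-1 : ℝ) ^ (lam.card - 1 - Λ.card) *
          (1 / 2 : ℝ) ^ (lam.card - Λ.card) * b)) :=
  monomial_lower_order_approx_general lam b
end

section
/- (SOIR SSE) With f and its SOIR approximation f̃ as above, SSE(f, f̃) = (1/4) Σ_{x ∈ Ω_{{i,j}}} ( Σ_{Λ ∈ S_{{i,j}}} β^Λ Π_{k ∈ Λ∖{i,j}} x_k )², where Ω_{{i,j}} = {x ∈ {0,1}^n : x_i = x_j = 1}. -/
/-!
On a monomial containing both `i` and `j` write
`x_i x_j = (x_i - ½)(x_j - ½) + (x_i + x_j)/2 - ¼`. By density the last three terms are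
represented on `S ∖ S_{i,j}`, so `f = g + e` with `g` representable there and
`e = (x_i - ½)(x_j - ½) r`, where `r` is the right-hand side's inner sum and does not depend
on `x_i, x_j`. Flipping `x_i` (or `x_j`) changes the sign of `e` but fixes every monomial
missing `i` (or `j`), so `e` is orthogonal to all functions represented on `S ∖ S_{i,j}`.
Hence the least-squares error is `∑ e² = (1/16) ∑ r² = (1/4) ∑_{Ω_{i,j}} r²`.
-/

open Finset

section Flip

variable {ι : Type*}

noncomputable def coord (k : ι) (x : ι → Bool) : ℝ := if x k then 1 else 0

noncomputable def centered (k : ι) (x : ι → Bool) : ℝ := coord k x - 1 / 2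

lemma centered_sq (k : ι) (x : ι → Bool) : centered k x ^ 2 = 1 / 4 := by
  cases h : x k <;> norm_num [centered, coord, h]

variable [DecidableEq ι]

def flipAt (k : ι) : Equiv.Perm (ι → Bool) :=
  Function.Involutive.toPerm (fun x => Function.update x k (!x k)) fun x => by simp

lemma flipAt_apply_self (k : ι) (x : ι → Bool) : flipAt k x k = !x k :=
  Function.update_self k _ x

lemma flipAt_apply_of_ne {k m : ι} (h : m ≠ k) (x : ι → Bool) : flipAt k x m = x m :=
  Function.update_of_ne h _ _

lemma coord_flipAt_self (k : ι) (x : ι → Bool) : coord k (flipAt k x) = 1 - coord k x := by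
  cases h : x k <;> simp [coord, flipAt_apply_self, h]

lemma coord_flipAt_of_ne {k m : ι} (h : m ≠ k) (x : ι → Bool) :
    coord m (flipAt k x) = coord m x := by
  rw [coord, coord, flipAt_apply_of_ne h]

lemma centered_flipAt_self (k : ι) (x : ι → Bool) : centered k (flipAt k x) = -centered k x := by
  rw [centered, centered, coord_flipAt_self]; ring

lemma centered_flipAt_of_ne {k m : ι} (h : m ≠ k) (x : ι → Bool) :
    centered m (flipAt k x) = centered m x := by
  rw [centered, centered, coord_flipAt_of_ne h]

variable [Fintype ι]

lemma sum_eq_zero_of_flipAt_neg {F : (ι → Bool) → ℝ} (k : ι)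
    (hF : ∀ x, F (flipAt k x) = -F x) : ∑ x, F x = 0 := by
  have h := Equiv.sum_comp (flipAt k) F
  simp only [hF, sum_neg_distrib] at h
  linarith

lemma sum_centered_mul_eq_zero {F : (ι → Bool) → ℝ} (k : ι)
    (hF : ∀ x, F (flipAt k x) = F x) : ∑ x, centered k x * F x = 0 :=
  sum_eq_zero_of_flipAt_neg k fun x => by rw [centered_flipAt_self, hF, neg_mul]

lemma sum_eq_two_mul_sum_coord_mul {G : (ι → Bool) → ℝ} (k : ι)
    (hG : ∀ x, G (flipAt k x) = G x) : ∑ x, G x = 2 * ∑ x, coord k x * G x := by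
  have h := Equiv.sum_comp (flipAt k) fun x => (1 - coord k x) * G x
  simp only [coord_flipAt_self, hG, sub_sub_cancel, sub_mul, one_mul, sum_sub_distrib] at h
  linarith

lemma sum_eq_four_mul_sum_filter {G : (ι → Bool) → ℝ} {i j : ι} (hij : i ≠ j)
    (hi : ∀ x, G (flipAt i x) = G x) (hj : ∀ x, G (flipAt j x) = G x) :
    ∑ x, G x = 4 * ∑ x ∈ univ.filter (fun x : ι → Bool => x i = true ∧ x j = true), G x := by
  have hj' : ∀ x, coord i (flipAt j x) * G (flipAt j x) = coord i x * G x := fun x => by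
    rw [coord_flipAt_of_ne hij, hj]
  rw [sum_eq_two_mul_sum_coord_mul i hi, sum_eq_two_mul_sum_coord_mul j hj', sum_filter]
  have hcoord : ∀ x, coord j x * (coord i x * G x) = if x i = true ∧ x j = true then G x else 0 :=
    fun x => by cases hxi : x i <;> cases hxj : x j <;> simp [coord, hxi, hxj]
  simp only [hcoord]
  ring

end Flip

section Represented

variable {n : ℕ}

lemma mono_flipAt {Λ : Finset (Fin n)} {k : Fin n} (hk : k ∉ Λ) (x : Fin n → Bool) :
    mono Λ (flipAt k x) = mono Λ x :=
  prod_congr rfl fun _ hm => coord_flipAt_of_ne (ne_of_mem_of_not_mem hm hk) x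

lemma coord_mul_mono_erase {Λ : Finset (Fin n)} {k : Fin n} (hk : k ∈ Λ) (x : Fin n → Bool) :
    coord k x * mono (Λ.erase k) x = mono Λ x :=
  mul_prod_erase Λ (fun m => coord m x) hk

def polySpace (S : Finset (Finset (Fin n))) : Submodule ℝ ((Fin n → Bool) → ℝ) where
  carrier := {g | ∃ γ, g = poly S γ}
  add_mem' := by
    rintro _ _ ⟨γ, rfl⟩ ⟨δ, rfl⟩
    exact ⟨γ + δ, by funext x; simp [poly, sum_add_distrib, add_mul]⟩
  zero_mem' := ⟨0, by funext x; simp [poly]⟩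
  smul_mem' := by
    rintro c _ ⟨γ, rfl⟩
    exact ⟨c • γ, by funext x; simp [poly, mul_sum, mul_assoc]⟩

lemma mono_mem_polySpace {S : Finset (Finset (Fin n))} {Λ : Finset (Fin n)} (hΛ : Λ ∈ S) :
    mono Λ ∈ polySpace S :=
  ⟨Pi.single Λ 1, by funext x; simp [poly, Pi.single_apply, hΛ]⟩

lemma sum_mul_eq_zero_of_mem_polySpace {S : Finset (Finset (Fin n))} {e p : (Fin n → Bool) → ℝ}
    (he : ∀ Λ ∈ S, ∑ x, e x * mono Λ x = 0) (hp : p ∈ polySpace S) : ∑ x, e x * p x = 0 := by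
  obtain ⟨γ, rfl⟩ := hp
  simp only [poly, mul_sum]
  rw [sum_comm]
  refine sum_eq_zero fun Λ hΛ => ?_
  simp only [mul_left_comm (e _)]
  rw [← mul_sum, he Λ hΛ, mul_zero]

lemma SSE_eq_sum_sq_of_isLSA {S : Finset (Finset (Fin n))} {f g e ftil : (Fin n → Bool) → ℝ}
    (h : isLSA S f ftil) (hfge : f = g + e) (hg : g ∈ polySpace S)
    (he : ∀ p ∈ polySpace S, ∑ x, e x * p x = 0) : SSE f ftil = ∑ x, e x ^ 2 := by
  have pythagoras : ∀ p ∈ polySpace S, SSE f p = ∑ x, e x ^ 2 + ∑ x, (g x - p x) ^ 2 := by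
    intro p hp
    have hcross := he (g - p) (sub_mem hg hp)
    have hsq : ∀ x, (f x - p x) ^ 2 = e x ^ 2 + (g x - p x) ^ 2 + 2 * (e x * (g - p) x) :=
      fun x => by simp only [hfge, Pi.add_apply, Pi.sub_apply]; ring
    simp only [SSE, hsq, sum_add_distrib, ← mul_sum, hcross, mul_zero, add_zero]
  obtain ⟨hftil, hmin⟩ := h
  obtain ⟨γ, hγ⟩ := hg
  refine le_antisymm ?_ ?_
  · calc SSE f ftil ≤ SSE f (poly S γ) := hmin γ
      _ = ∑ x, e x ^ 2 := by rw [pythagoras _ ⟨γ, rfl⟩, ← hγ]; simp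
  · rw [pythagoras ftil hftil]
    exact le_add_of_nonneg_right (sum_nonneg fun x _ => sq_nonneg _)

end Represented

section PairReduction

variable {n : ℕ} {S : Finset (Finset (Fin n))} {i j : Fin n}

noncomputable def pairInteraction (S : Finset (Finset (Fin n))) (β : Finset (Fin n) → ℝ)
    (i j : Fin n) (x : Fin n → Bool) : ℝ :=
  ∑ Λ ∈ S.filter (fun Λ => ({i, j} : Finset (Fin n)) ⊆ Λ), β Λ * mono (Λ \ {i, j}) x

lemma pairInteraction_flipAt (β : Finset (Fin n) → ℝ) {k : Fin n} (hk : k = i ∨ k = j)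
    (x : Fin n → Bool) : pairInteraction S β i j (flipAt k x) = pairInteraction S β i j x :=
  sum_congr rfl fun Λ _ => by rw [mono_flipAt (by simp [hk])]

lemma mono_eq_centered_mul_add (hij : i ≠ j) {Λ : Finset (Fin n)} (hi : i ∈ Λ) (hj : j ∈ Λ)
    (x : Fin n → Bool) :
    mono Λ x = centered i x * centered j x * mono (Λ \ {i, j}) x
      + (mono (Λ.erase j) x + mono (Λ.erase i) x) / 2 - mono (Λ \ {i, j}) x / 4 := by
  have hsj : Λ \ {i, j} = (Λ.erase j).erase i := by
    rw [sdiff_insert, sdiff_singleton_eq_erase]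
  have herase_j : mono (Λ.erase j) x = coord i x * mono (Λ \ {i, j}) x := by
    rw [hsj, coord_mul_mono_erase (mem_erase.2 ⟨hij, hi⟩)]
  have herase_i : mono (Λ.erase i) x = coord j x * mono (Λ \ {i, j}) x := by
    rw [hsj, erase_right_comm, coord_mul_mono_erase (mem_erase.2 ⟨hij.symm, hj⟩)]
  rw [← coord_mul_mono_erase hj, herase_j, herase_i, centered, centered]
  ring

lemma mono_sub_centered_mul_mem_polySpace (hdense : ∀ Λ ∈ S, ∀ lam ⊆ Λ, lam ∈ S) (hij : i ≠ j)
    {Λ : Finset (Fin n)} (hΛ : Λ ∈ S) (hi : i ∈ Λ) (hj : j ∈ Λ) :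
    mono Λ - (fun x => centered i x * centered j x * mono (Λ \ {i, j}) x) ∈
      polySpace (S.filter (fun Λ => ¬ ({i, j} : Finset (Fin n)) ⊆ Λ)) := by
  have hmem : ∀ Λ' ⊆ Λ, (i ∉ Λ' ∨ j ∉ Λ') →
      mono Λ' ∈ polySpace (S.filter (fun Λ => ¬ ({i, j} : Finset (Fin n)) ⊆ Λ)) :=
    fun Λ' hsub hmiss => mono_mem_polySpace <| mem_filter.2 ⟨hdense Λ hΛ Λ' hsub, by
      rw [insert_subset_iff, singleton_subset_iff]; tauto⟩
  have hdecomp : mono Λ - (fun x => centered i x * centered j x * mono (Λ \ {i, j}) x) =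
      (1 / 2 : ℝ) • mono (Λ.erase j) + (1 / 2 : ℝ) • mono (Λ.erase i)
        - (1 / 4 : ℝ) • mono (Λ \ {i, j}) := by
    funext x
    simp only [Pi.sub_apply, Pi.add_apply, Pi.smul_apply, smul_eq_mul,
      mono_eq_centered_mul_add hij hi hj x]
    ring
  rw [hdecomp]
  refine sub_mem (add_mem ?_ ?_) ?_ <;> refine Submodule.smul_mem _ _ (hmem _ ?_ ?_)
  · exact erase_subset _ _
  · exact .inr (notMem_erase _ _)
  · exact erase_subset _ _
  · exact .inl (notMem_erase _ _)
  · exact sdiff_subset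
  · exact .inl (by simp)

lemma poly_sub_mem_polySpace (hdense : ∀ Λ ∈ S, ∀ lam ⊆ Λ, lam ∈ S) (hij : i ≠ j)
    (β : Finset (Fin n) → ℝ) :
    poly S β - (fun x => centered i x * centered j x * pairInteraction S β i j x) ∈
      polySpace (S.filter (fun Λ => ¬ ({i, j} : Finset (Fin n)) ⊆ Λ)) := by
  have hsplit : poly S β - (fun x => centered i x * centered j x * pairInteraction S β i j x) =
      poly (S.filter (fun Λ => ¬ ({i, j} : Finset (Fin n)) ⊆ Λ)) β +
        ∑ Λ ∈ S.filter (fun Λ => ({i, j} : Finset (Fin n)) ⊆ Λ),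
          β Λ • (mono Λ - fun x => centered i x * centered j x * mono (Λ \ {i, j}) x) := by
    funext x
    simp only [poly, pairInteraction, Pi.add_apply, Finset.sum_apply, Pi.smul_apply, Pi.sub_apply,
      smul_eq_mul, mul_sum]
    rw [← sum_filter_add_sum_filter_not S (fun Λ => ({i, j} : Finset (Fin n)) ⊆ Λ), add_comm,
      add_sub_assoc, ← sum_sub_distrib]
    congr 1
    exact sum_congr rfl fun Λ _ => by ring
  rw [hsplit]
  refine add_mem ⟨β, rfl⟩ (sum_mem fun Λ hΛ => Submodule.smul_mem _ _ ?_)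
  obtain ⟨hΛ, hpair⟩ := mem_filter.1 hΛ
  rw [insert_subset_iff, singleton_subset_iff] at hpair
  exact mono_sub_centered_mul_mem_polySpace hdense hij hΛ hpair.1 hpair.2

lemma sum_centered_mul_pairInteraction_mul_mono (hij : i ≠ j) (β : Finset (Fin n) → ℝ)
    {Λ : Finset (Fin n)} (hΛ : ¬ ({i, j} : Finset (Fin n)) ⊆ Λ) :
    ∑ x, centered i x * centered j x * pairInteraction S β i j x * mono Λ x = 0 := by
  rw [insert_subset_iff, singleton_subset_iff, not_and_or] at hΛ
  rcases hΛ with hi | hj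
  · simp only [mul_assoc]
    refine sum_centered_mul_eq_zero i fun x => ?_
    rw [centered_flipAt_of_ne hij.symm, pairInteraction_flipAt β (.inl rfl), mono_flipAt hi]
  · simp only [mul_comm (centered i _), mul_assoc]
    refine sum_centered_mul_eq_zero j fun x => ?_
    rw [centered_flipAt_of_ne hij, pairInteraction_flipAt β (.inr rfl), mono_flipAt hj]

end PairReduction

theorem soir_sse_general {n : ℕ} (S : Finset (Finset (Fin n)))
    (hdense : ∀ Λ ∈ S, ∀ lam ⊆ Λ, lam ∈ S)
    (i j : Fin n) (hij : i ≠ j)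
    (β : Finset (Fin n) → ℝ) (ftil : (Fin n → Bool) → ℝ)
    (h : isLSA (S.filter (fun Λ => ¬ ({i, j} : Finset (Fin n)) ⊆ Λ)) (poly S β) ftil) :
    SSE (poly S β) ftil =
      (1 / 4) * ∑ x ∈ Finset.univ.filter (fun x : Fin n → Bool => x i = true ∧ x j = true),
        (∑ Λ ∈ S.filter (fun Λ => ({i, j} : Finset (Fin n)) ⊆ Λ),
          β Λ * mono (Λ \ {i, j}) x) ^ 2 := by
  rw [SSE_eq_sum_sq_of_isLSA h (sub_add_cancel _ _).symm (poly_sub_mem_polySpace hdense hij β)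
    fun p => sum_mul_eq_zero_of_mem_polySpace fun Λ hΛ =>
      sum_centered_mul_pairInteraction_mul_mono hij β (mem_filter.1 hΛ).2]
  have hflip : ∀ k, (k = i ∨ k = j) → ∀ x,
      pairInteraction S β i j (flipAt k x) ^ 2 = pairInteraction S β i j x ^ 2 :=
    fun k hk x => by rw [pairInteraction_flipAt β hk]
  simp only [mul_pow, centered_sq]
  rw [← mul_sum, sum_eq_four_mul_sum_filter hij (hflip i (.inl rfl)) (hflip j (.inr rfl))]
  simp only [pairInteraction]
  ring

/-- Error sum of squares of the SOIR approximation. -/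
theorem soir_sse {n : ℕ} (S : Finset (Finset (Fin n)))
    (hdense : ∀ Λ ∈ S, ∀ lam ⊆ Λ, lam ∈ S)
    (i j : Fin n) (hij : i ≠ j) (hmem : ({i, j} : Finset (Fin n)) ∈ S)
    (β : Finset (Fin n) → ℝ) (ftil : (Fin n → Bool) → ℝ)
    (h : isLSA (S.filter (fun Λ => ¬ ({i, j} : Finset (Fin n)) ⊆ Λ)) (poly S β) ftil) :
    SSE (poly S β) ftil =
      (1 / 4) * ∑ x ∈ Finset.univ.filter (fun x : Fin n → Bool => x i = true ∧ x j = true),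
        (∑ Λ ∈ S.filter (fun Λ => ({i, j} : Finset (Fin n)) ⊆ Λ),
          β Λ * mono (Λ \ {i, j}) x) ^ 2 :=
  soir_sse_general S hdense i j hij β ftil h
end

section
/- (Split bound) Let i ≠ j and r ∉ {i,j}, with {i,j,r} ∈ S_{{i,j}}. Then for all x ∈ {0,1}^n, f(x) ≤ Σ_{Λ∈S∖S_{{i,j}}} β^Λ Π_{k∈Λ} x_k + x_i·max{0, Σ_{Λ∈S_{{i,j,r}}} β^Λ Π_{k∈Λ∖{i,j,r}} x_k} + x_i·max{0, Σ_{Λ∈S_{{i,j}}∖S_{{i,j,r}}} β^Λ Π_{k∈Λ∖{i,j}} x_k}, where f(x) = Σ_{Λ∈S} β^Λ Π_{k∈Λ} x_k. -/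
open Finset

/-!
Partition `S` into the interactions not containing `{i, j}`, those containing `{i, j, r}`, and
the remaining ones containing `{i, j}`. On each of the last two groups the monomial of
`{i, j, r}`, resp. `{i, j}`, factors out; it is `0` or `1` and at most `x_i`, so the group's sum
is at most `x_i` times the positive part of the cofactor sum.
-/

lemma mono_nonneg {n : ℕ} (Λ : Finset (Fin n)) (x : Fin n → Bool) : 0 ≤ mono Λ x :=
  prod_nonneg fun _ _ => by split_ifs <;> norm_num

lemma mono_le_ite_of_mem {n : ℕ} {Λ : Finset (Fin n)} {i : Fin n} (hi : i ∈ Λ)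
    (x : Fin n → Bool) : mono Λ x ≤ if x i then 1 else 0 := by
  by_cases hx : x i
  · simp only [hx, if_true]
    exact prod_le_one (fun _ _ => by split_ifs <;> norm_num) fun _ _ => by split_ifs <;> norm_num
  · simp only [hx, Bool.false_eq_true, if_false]
    exact (prod_eq_zero hi (by simp [hx])).le

lemma mono_eq_mul_mono_sdiff {n : ℕ} {s Λ : Finset (Fin n)} (h : s ⊆ Λ) (x : Fin n → Bool) :
    mono Λ x = mono s x * mono (Λ \ s) x := by
  rw [mono, mono, mono, mul_comm, prod_sdiff h]

lemma sum_le_ite_mul_max_of_forall_subset {n : ℕ} {T : Finset (Finset (Fin n))}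
    {s : Finset (Fin n)} {i : Fin n} (hi : i ∈ s) (hT : ∀ Λ ∈ T, s ⊆ Λ)
    (β : Finset (Fin n) → ℝ) (x : Fin n → Bool) :
    ∑ Λ ∈ T, β Λ * mono Λ x ≤
      (if x i then 1 else 0) * max 0 (∑ Λ ∈ T, β Λ * mono (Λ \ s) x) :=
  calc ∑ Λ ∈ T, β Λ * mono Λ x = mono s x * ∑ Λ ∈ T, β Λ * mono (Λ \ s) x := by
        rw [mul_sum]
        refine sum_congr rfl fun Λ hΛ => ?_
        rw [mono_eq_mul_mono_sdiff (hT Λ hΛ)]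
        ring
    _ ≤ mono s x * max 0 (∑ Λ ∈ T, β Λ * mono (Λ \ s) x) :=
        mul_le_mul_of_nonneg_left (le_max_right _ _) (mono_nonneg s x)
    _ ≤ _ := mul_le_mul_of_nonneg_right (mono_le_ite_of_mem hi x) (le_max_left _ _)

lemma sum_eq_sum_filter_not_subset_add_sum_filter_subset_add {α M : Type*} [DecidableEq α]
    [AddCommMonoid M] (S : Finset (Finset α)) {s t : Finset α} (hst : s ⊆ t)
    (f : Finset α → M) :
    ∑ Λ ∈ S, f Λ =
      ∑ Λ ∈ S.filter (fun Λ => ¬ s ⊆ Λ), f Λ + ∑ Λ ∈ S.filter (fun Λ => t ⊆ Λ), f Λ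
        + ∑ Λ ∈ S.filter (fun Λ => s ⊆ Λ ∧ ¬ t ⊆ Λ), f Λ := by
  have hsplit := sum_filter_add_sum_filter_not (S.filter (fun Λ => s ⊆ Λ)) (fun Λ => t ⊆ Λ) f
  rw [filter_filter, filter_filter,
    filter_congr fun Λ _ => (and_iff_right_of_imp hst.trans : s ⊆ Λ ∧ t ⊆ Λ ↔ t ⊆ Λ)] at hsplit
  rw [← sum_filter_add_sum_filter_not S (fun Λ => s ⊆ Λ), ← hsplit]
  abel

theorem split_upper_bound_general {n : ℕ} (S : Finset (Finset (Fin n))) (i j r : Fin n)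
    (β : Finset (Fin n) → ℝ) (x : Fin n → Bool) :
    poly S β x ≤
      (∑ Λ ∈ S.filter (fun Λ => ¬ ({i, j} : Finset (Fin n)) ⊆ Λ), β Λ * mono Λ x)
        + (if x i then (1 : ℝ) else 0) *
            max 0 (∑ Λ ∈ S.filter (fun Λ => ({i, j, r} : Finset (Fin n)) ⊆ Λ),
              β Λ * mono (Λ \ {i, j, r}) x)
        + (if x i then (1 : ℝ) else 0) *
            max 0 (∑ Λ ∈ S.filter (fun Λ => ({i, j} : Finset (Fin n)) ⊆ Λ ∧
                ¬ ({i, j, r} : Finset (Fin n)) ⊆ Λ),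
              β Λ * mono (Λ \ {i, j}) x) := by
  have hsub : ({i, j} : Finset (Fin n)) ⊆ {i, j, r} :=
    insert_subset_insert i (singleton_subset_iff.2 (mem_insert_self j {r}))
  rw [poly, sum_eq_sum_filter_not_subset_add_sum_filter_subset_add S hsub]
  gcongr
  · exact sum_le_ite_mul_max_of_forall_subset (mem_insert_self i _)
      (fun Λ hΛ => (mem_filter.1 hΛ).2) β x
  · exact sum_le_ite_mul_max_of_forall_subset (mem_insert_self i _)
      (fun Λ hΛ => (mem_filter.1 hΛ).2.1) β x

/-- The split upper bound obtained by splitting off the interactions containing `r`. -/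
theorem split_upper_bound {n : ℕ} (S : Finset (Finset (Fin n))) (i j r : Fin n)
    (hij : i ≠ j) (hir : i ≠ r) (hjr : j ≠ r)
    (hmem : ({i, j, r} : Finset (Fin n)) ∈ S)
    (β : Finset (Fin n) → ℝ) (x : Fin n → Bool) :
    poly S β x ≤
      (∑ Λ ∈ S.filter (fun Λ => ¬ ({i, j} : Finset (Fin n)) ⊆ Λ), β Λ * mono Λ x)
        + (if x i then (1 : ℝ) else 0) *
            max 0 (∑ Λ ∈ S.filter (fun Λ => ({i, j, r} : Finset (Fin n)) ⊆ Λ),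
              β Λ * mono (Λ \ {i, j, r}) x)
        + (if x i then (1 : ℝ) else 0) *
            max 0 (∑ Λ ∈ S.filter (fun Λ => ({i, j} : Finset (Fin n)) ⊆ Λ ∧
                ¬ ({i, j, r} : Finset (Fin n)) ⊆ Λ),
              β Λ * mono (Λ \ {i, j}) x) :=
  split_upper_bound_general S i j r β x
end

section
/- Summing out one variable of a binary MRF preserves the factorized form: with U(x) = Σ_{Λ∈S} β^Λ Π_{k∈Λ} x_k and i ∈ N, Σ_{x_i∈{0,1}} exp(U(x)) = exp(Σ_{Λ∈S∖S_{{i}}} β^Λ Π_{k∈Λ} x_k) · Σ_{x_i∈{0,1}} exp(Σ_{Λ∈S_{{i}}} β^Λ Π_{k∈Λ} x_k), and moreover there exist real coefficients β̌^Λ indexed by subsets Λ of N∖{i} of the variables appearing jointly with i such that Σ_{x_i∈{0,1}} exp(Σ_{Λ∈S_{{i}}} β^Λ Π_{k∈Λ} x_k) = exp(Σ_{Λ} β̌^Λ Π_{k∈Λ} x_k). -/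
open Finset

/-!
The interactions not involving `x_i` do not change with `x_i`, so by `exp (a + b) = exp a * exp b`
they factor out of the sum over `x_i`. The remaining sum is positive and does not depend on `x_i`,
so its logarithm is a pseudo-Boolean function of the other variables. Möbius inversion on the
lattice of subsets writes every pseudo-Boolean function as a multilinear polynomial, and
evaluating that polynomial at `x` with `x_i` set to `false` removes every monomial containing `i`.
-/

open Function

section MoebiusInversion

variable {𝕜 α : Type*} [Ring 𝕜] [PartialOrder α] [OrderBot α] [LocallyFiniteOrder α]
  [DecidableEq α]

theorem exists_eq_sum_Iic (g : α → 𝕜) : ∃ f : α → 𝕜, ∀ x, g x = ∑ y ∈ Iic x, f y := by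
  refine ⟨fun y => ∑ z ∈ Iic y, IncidenceAlgebra.mu 𝕜 z y * g z, fun x => ?_⟩
  calc g x = ∑ z ∈ Iic x, (if z = x then 1 else 0) * g z := by simp
    _ = ∑ z ∈ Iic x, ∑ y ∈ Icc z x, IncidenceAlgebra.mu 𝕜 z y * g z := by
      simp only [← sum_mul, IncidenceAlgebra.sum_Icc_mu_right]
    _ = ∑ y ∈ Iic x, ∑ z ∈ Iic y, IncidenceAlgebra.mu 𝕜 z y * g z :=
      sum_comm' fun z y => by simp only [mem_Iic, mem_Icc]; grind

end MoebiusInversion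

section PseudoBoolean

variable {n : ℕ}

theorem mono_eq_ite_subset (Λ : Finset (Fin n)) (x : Fin n → Bool) :
    mono Λ x = if Λ ⊆ ({k | x k} : Finset (Fin n)) then 1 else 0 := by
  simp [mono, prod_boole, subset_iff]

theorem poly_univ_eq_sum_Iic (β : Finset (Fin n) → ℝ) (x : Fin n → Bool) :
    poly univ β x = ∑ Λ ∈ Iic ({k | x k} : Finset (Fin n)), β Λ := by
  simp [poly, mono_eq_ite_subset, Iic_eq_powerset, ← filter_subset_univ, sum_filter]

theorem mono_update_of_notMem {Λ : Finset (Fin n)} {i : Fin n} (h : i ∉ Λ) (x : Fin n → Bool)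
    (b : Bool) : mono Λ (update x i b) = mono Λ x :=
  prod_congr rfl fun k hk => by rw [update_of_ne (ne_of_mem_of_not_mem hk h)]

theorem mono_update_false_of_mem {Λ : Finset (Fin n)} {i : Fin n} (h : i ∈ Λ)
    (x : Fin n → Bool) : mono Λ (update x i false) = 0 :=
  prod_eq_zero h (by simp)

theorem poly_eq_add_filter (S : Finset (Finset (Fin n))) (β : Finset (Fin n) → ℝ) (i : Fin n)
    (x : Fin n → Bool) :
    poly S β x = poly {Λ ∈ S | i ∉ Λ} β x + poly {Λ ∈ S | i ∈ Λ} β x := by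
  rw [poly, poly, poly, add_comm, sum_filter_add_sum_filter_not]

theorem poly_filter_notMem_update (S : Finset (Finset (Fin n))) (β : Finset (Fin n) → ℝ)
    (i : Fin n) (x : Fin n → Bool) (b : Bool) :
    poly {Λ ∈ S | i ∉ Λ} β (update x i b) = poly {Λ ∈ S | i ∉ Λ} β x :=
  sum_congr rfl fun Λ hΛ => by rw [mono_update_of_notMem (mem_filter.1 hΛ).2]

theorem poly_filter_mem_update_false (S : Finset (Finset (Fin n))) (β : Finset (Fin n) → ℝ)
    (i : Fin n) (x : Fin n → Bool) : poly {Λ ∈ S | i ∈ Λ} β (update x i false) = 0 :=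
  sum_eq_zero fun Λ hΛ => by rw [mono_update_false_of_mem (mem_filter.1 hΛ).2, mul_zero]

theorem exists_poly_univ_eq (f : (Fin n → Bool) → ℝ) : ∃ β, ∀ x, f x = poly univ β x := by
  obtain ⟨β, hβ⟩ := exists_eq_sum_Iic fun Λ : Finset (Fin n) => f fun k => k ∈ Λ
  exact ⟨β, fun x => by simpa [poly_univ_eq_sum_Iic] using hβ {k | x k}⟩

theorem exists_poly_filter_notMem_eq (f : (Fin n → Bool) → ℝ) (i : Fin n)
    (hf : ∀ x, f (update x i false) = f x) :
    ∃ β, (∀ Λ, i ∈ Λ → β Λ = 0) ∧ ∀ x, f x = poly {Λ | i ∉ Λ} β x := by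
  obtain ⟨β, hβ⟩ := exists_poly_univ_eq f
  refine ⟨fun Λ => if i ∈ Λ then 0 else β Λ, fun Λ h => if_pos h, fun x => ?_⟩
  calc f x = poly univ β (update x i false) := (hf x).symm.trans (hβ _)
    _ = poly {Λ | i ∉ Λ} β x := by
      rw [poly_eq_add_filter _ _ i, poly_filter_mem_update_false, add_zero,
        poly_filter_notMem_update]
    _ = poly {Λ | i ∉ Λ} (fun Λ => if i ∈ Λ then 0 else β Λ) x :=
      sum_congr rfl fun Λ hΛ => by simp [(mem_filter.1 hΛ).2]

end PseudoBoolean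

/-- Summing out one variable of a binary MRF preserves the factorized form. -/
theorem sum_out_variable {n : ℕ} (S : Finset (Finset (Fin n)))
    (β : Finset (Fin n) → ℝ) (i : Fin n) :
    (∀ x : Fin n → Bool,
      ∑ b : Bool, Real.exp (poly S β (Function.update x i b)) =
        Real.exp (poly (S.filter (fun Λ => i ∉ Λ)) β x) *
          ∑ b : Bool,
            Real.exp (poly (S.filter (fun Λ => i ∈ Λ)) β (Function.update x i b))) ∧
    ∃ βc : Finset (Fin n) → ℝ, (∀ Λ, i ∈ Λ → βc Λ = 0) ∧
      ∀ x : Fin n → Bool,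
        ∑ b : Bool,
            Real.exp (poly (S.filter (fun Λ => i ∈ Λ)) β (Function.update x i b)) =
          Real.exp (poly ((Finset.univ : Finset (Finset (Fin n))).filter
            (fun Λ => i ∉ Λ)) βc x) := by
  refine ⟨fun x => ?_, ?_⟩
  · rw [mul_sum]
    refine sum_congr rfl fun b _ => ?_
    rw [poly_eq_add_filter S β i, poly_filter_notMem_update, Real.exp_add]
  · obtain ⟨βc, hβc_mem, hβc⟩ := exists_poly_filter_notMem_eq
      (fun x => Real.log (∑ b : Bool, Real.exp (poly {Λ ∈ S | i ∈ Λ} β (update x i b)))) i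
      (fun x => by simp only [update_idem])
    refine ⟨βc, hβc_mem, fun x => ?_⟩
    rw [← hβc, Real.exp_log (sum_pos (fun b _ => Real.exp_pos _) univ_nonempty)]
end
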